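/- Let u, v : ℝ → ℝ be functions such that for every real t, u has derivative sin(π · u(t)) at t and v has derivative cos(π · u(t)) at t, and suppose 0 < u(0) < 1. Then v(t) → −∞ as t → +∞ and also v(t) → −∞ as t → −∞. -/

import Mathlib

/-!
The first coordinate solves the autonomous equation `u' = sin (π u)`, whose right-hand side is
Lipschitz and vanishes at `0` and `1`. By uniqueness of solutions `u` never reaches these
equilibria, so it stays in `(0, 1)`, where `u' > 0`. Being increasing with derivative bounded
below on `[u 0, 1/2]`, it eventually exceeds `1/2`, and from then on `v' = cos (π u)` is
bounded above by a negative constant, so `v → -∞` as `t → +∞`. The case `t → -∞` follows from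
the symmetry `(u, v)(t) ↦ (1 - u (-t), v (-t))` of the equations.
-/

open Real Filter Set

theorem ODE_solution_eq_const_of_apply_eq_zero {E : Type*} [NormedAddCommGroup E]
    [NormedSpace ℝ E] {f : E → E} {K : NNReal} (hf : LipschitzWith K f) {u : ℝ → E}
    (hu : ∀ t, HasDerivAt u (f (u t)) t) {c : E} (hc : f c = 0) {t₀ : ℝ} (h : u t₀ = c) :
    u = fun _ ↦ c :=
  ODE_solution_unique_univ (v := fun _ ↦ f) (s := fun _ ↦ univ) (fun _ ↦ hf.lipschitzOnWith)
    (fun t ↦ ⟨hu t, trivial⟩) (fun t ↦ ⟨hc ▸ hasDerivAt_const t c, trivial⟩) h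

theorem ODE_solution_mem_Ioo_of_apply_eq_zero {f : ℝ → ℝ} {K : NNReal}
    (hf : LipschitzWith K f) {u : ℝ → ℝ} (hu : ∀ t, HasDerivAt u (f (u t)) t) {a b : ℝ}
    (ha : f a = 0) (hb : f b = 0) {t₀ : ℝ} (ht₀ : u t₀ ∈ Ioo a b) (t : ℝ) : u t ∈ Ioo a b := by
  have hcont : Continuous u := continuous_iff_continuousAt.2 fun t ↦ (hu t).continuousAt
  refine ⟨not_le.1 fun hat ↦ ?_, not_le.1 fun hbt ↦ ?_⟩
  · obtain ⟨s, hs⟩ := intermediate_value_univ t t₀ hcont ⟨hat, ht₀.1.le⟩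
    exact ht₀.1.ne' (congrFun (ODE_solution_eq_const_of_apply_eq_zero hf hu ha hs) t₀)
  · obtain ⟨s, hs⟩ := intermediate_value_univ t₀ t hcont ⟨ht₀.2.le, hbt⟩
    exact ht₀.2.ne (congrFun (ODE_solution_eq_const_of_apply_eq_zero hf hu hb hs) t₀)

theorem ODE_solution_exists_lt_of_monotone {f : ℝ → ℝ} {u : ℝ → ℝ}
    (hu : ∀ t, HasDerivAt u (f (u t)) t) (hmono : Monotone u) {t₀ c : ℝ}
    (hf : ContinuousOn f (Icc (u t₀) c)) (hpos : ∀ x ∈ Icc (u t₀) c, 0 < f x) :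
    ∃ t, c < u t := by
  by_contra! hle
  obtain ⟨x, hx, hmin⟩ := isCompact_Icc.exists_isMinOn ⟨u t₀, le_rfl, hle t₀⟩ hf
  have hgrowth : ∀ t, t₀ ≤ t → f x * (t - t₀) ≤ u t - u t₀ := by
    refine fun t ht ↦ (convex_Ici t₀).mul_sub_le_image_sub_of_le_deriv
      (fun s _ ↦ (hu s).continuousAt.continuousWithinAt)
      (fun s _ ↦ (hu s).differentiableAt.differentiableWithinAt) (fun s hs ↦ ?_)
      t₀ self_mem_Ici t ht ht
    rw [interior_Ici] at hs
    rw [(hu s).deriv]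
    exact hmin ⟨hmono hs.le, hle s⟩
  have hδ := hpos x hx
  have hlate := hgrowth (t₀ + (c - u t₀ + 1) / f x)
    (le_add_of_nonneg_right (div_nonneg (by linarith [hx.1.trans hx.2]) hδ.le))
  rw [add_sub_cancel_left, mul_div_cancel₀ _ hδ.ne'] at hlate
  linarith [hle (t₀ + (c - u t₀ + 1) / f x)]

theorem tendsto_atTop_atBot_of_hasDerivAt_le_neg {v v' : ℝ → ℝ} {T ε : ℝ} (hε : 0 < ε)
    (hv : ∀ t ≥ T, HasDerivAt v (v' t) t) (hle : ∀ t ≥ T, v' t ≤ -ε) :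
    Tendsto v atTop atBot := by
  have hdecay : ∀ t ≥ T, v t - v T ≤ -ε * (t - T) := by
    refine fun t ht ↦ (convex_Ici T).image_sub_le_mul_sub_of_deriv_le
      (fun s hs ↦ (hv s hs).continuousAt.continuousWithinAt)
      (fun s hs ↦ (hv s (interior_subset hs)).differentiableAt.differentiableWithinAt)
      (fun s hs ↦ ?_) T self_mem_Ici t ht ht
    rw [interior_Ici] at hs
    rw [(hv s hs.le).deriv]
    exact hle s hs.le
  have hline : Tendsto (fun t ↦ v T + ε * T + -(ε * t)) atTop atBot :=
    tendsto_atBot_add_const_left _ _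
      (tendsto_neg_atTop_atBot.comp (tendsto_id.const_mul_atTop hε))
  refine tendsto_atBot_mono' atTop ?_ hline
  filter_upwards [eventually_ge_atTop T] with t ht
  linarith [hdecay t ht]

theorem lipschitzWith_sin_pi_mul : LipschitzWith ‖π‖₊ (fun x : ℝ ↦ sin (π * x)) := by
  have := lipschitzWith_sin.comp (lipschitzWith_smul (β := ℝ) π)
  rwa [one_mul] at this

theorem sin_pi_mul_pos {x : ℝ} (hx : x ∈ Ioo 0 1) : 0 < sin (π * x) :=
  sin_pos_of_pos_of_lt_pi (mul_pos pi_pos hx.1) (mul_lt_of_lt_one_right pi_pos hx.2)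

structure IsModelStableCurve (u v : ℝ → ℝ) : Prop where
  hasDerivAt_fst : ∀ t, HasDerivAt u (sin (π * u t)) t
  hasDerivAt_snd : ∀ t, HasDerivAt v (cos (π * u t)) t

namespace IsModelStableCurve

variable {u v : ℝ → ℝ}

theorem reflect (h : IsModelStableCurve u v) :
    IsModelStableCurve (fun t ↦ 1 - u (-t)) (fun t ↦ v (-t)) where
  hasDerivAt_fst t := by
    have := ((h.hasDerivAt_fst (-t)).scomp t (hasDerivAt_neg t)).const_sub 1
    simpa [mul_sub, sin_pi_sub] using this
  hasDerivAt_snd t := by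
    have := (h.hasDerivAt_snd (-t)).scomp t (hasDerivAt_neg t)
    simpa [Function.comp_def, mul_sub, cos_pi_sub] using this

theorem fst_mem_Ioo (h : IsModelStableCurve u v) (h0 : u 0 ∈ Ioo 0 1) (t : ℝ) :
    u t ∈ Ioo 0 1 :=
  ODE_solution_mem_Ioo_of_apply_eq_zero lipschitzWith_sin_pi_mul h.hasDerivAt_fst
    (by simp) (by simp) h0 t

theorem tendsto_snd_atTop (h : IsModelStableCurve u v) (h0 : u 0 ∈ Ioo 0 1) :
    Tendsto v atTop atBot := by
  have hmem := h.fst_mem_Ioo h0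
  have hmono : Monotone u :=
    monotone_of_deriv_nonneg (fun t ↦ (h.hasDerivAt_fst t).differentiableAt) fun t ↦
      (h.hasDerivAt_fst t).deriv ▸ (sin_pi_mul_pos (hmem t)).le
  obtain ⟨T, hT⟩ : ∃ T, 1 / 2 < u T :=
    ODE_solution_exists_lt_of_monotone h.hasDerivAt_fst hmono (by fun_prop)
      fun x hx ↦ sin_pi_mul_pos ⟨(hmem 0).1.trans_le hx.1, by linarith [hx.2]⟩
  have hcosT : cos (π * u T) < 0 :=
    cos_neg_of_pi_div_two_lt_of_lt (by nlinarith [pi_pos]) (by nlinarith [pi_pos, (hmem T).2])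
  refine tendsto_atTop_atBot_of_hasDerivAt_le_neg (T := T) (neg_pos.2 hcosT)
    (fun t _ ↦ h.hasDerivAt_snd t) fun t ht ↦ ?_
  rw [neg_neg]
  exact cos_le_cos_of_nonneg_of_le_pi (by nlinarith [pi_pos, (hmem T).1])
    (mul_le_of_le_one_right pi_pos.le (hmem t).2.le) (by nlinarith [pi_pos, hmono ht])

end IsModelStableCurve

/-- If `(u, v)` is an integral curve of the model stable vector field,
i.e. `u' t = sin (π · u t)` and `v' t = cos (π · u t)` for all `t`, and
`0 < u 0 < 1`, then `v t → −∞` as `t → +∞` and also as `t → −∞`. -/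
theorem stmt_5 (u v : ℝ → ℝ)
    (hu : ∀ t : ℝ, HasDerivAt u (Real.sin (π * u t)) t)
    (hv : ∀ t : ℝ, HasDerivAt v (Real.cos (π * u t)) t)
    (h0 : 0 < u 0) (h1 : u 0 < 1) :
    Tendsto v atTop atBot ∧ Tendsto v atBot atBot := by
  have h : IsModelStableCurve u v := ⟨hu, hv⟩
  refine ⟨h.tendsto_snd_atTop ⟨h0, h1⟩, ?_⟩
  have hreflect : Tendsto (fun t ↦ v (-t)) atTop atBot :=
    h.reflect.tendsto_snd_atTop (by simpa using And.intro h1 h0)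
  simpa [Function.comp_def] using hreflect.comp tendsto_neg_atBot_atTop
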